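/- (Lemma 2.4) For every τ, ν, γ > 0 and every admissible v, ∫_Z ( −∂_s² v − 4 (τ^{2γ/3}/ν²) s² v ) · ( −4 (τ^{γ/3}/ν) s ∂_s v − 2 (τ^{γ/3}/ν) v ) ds dx = −4 (τ^{γ/3}/ν) ∫_Z |∂_s v|² − 16 (τ^γ/ν³) ∫_Z s² |v|² + B₁(v), where B₁(v) = 2 (τ^{γ/3}/ν) ∫_0^1 [ s |∂_s v|² ]_{s=−S0}^{s=S0} dx + 2 (τ^{γ/3}/ν) ∫_0^1 [ v ∂_s v ]_{s=−S0}^{s=S0} dx + 8 (τ^γ/ν³) ∫_0^1 [ s³ |v|² ]_{s=−S0}^{s=S0} dx. -/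

import Mathlib

/-!
With `a = τ^{γ/3}/ν` the integrand is `(-v'' - 4a²s²v)(-4asv' - 2av)`, where `'` is `∂_s`.
Expanding, it equals `∂_s Φ - 4a|v'|² - 16a³s²v²` for the flux
`Φ = 2as|v'|² + 2avv' + 8a³s³v²`, so integrating first in `s` (Fubini) and applying the
fundamental theorem of calculus on `[-S0, S0]` leaves the boundary terms `B₁(v)`.
-/

open MeasureTheory Set Filter

noncomputable section

/-- The rectangle `Z = (-S0,S0) × (0,1)`, with variables `(s,x)`. -/
def Zset (S0 : ℝ) : Set (ℝ × ℝ) := Ioo (-S0) S0 ×ˢ Ioo (0:ℝ) 1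

theorem setIntegral_Ioo_prod_eq_integral_sub {β E : Type*} [MeasurableSpace β] {μ : Measure β}
    [SFinite μ] [NormedAddCommGroup E] [NormedSpace ℝ E] [CompleteSpace E]
    {a b : ℝ} (hab : a ≤ b) {t : Set β} (ht : MeasurableSet t) {F f : ℝ → β → E}
    (hF : ∀ x ∈ t, ∀ s ∈ Icc a b, HasDerivAt (F · x) (f s x) s)
    (hf : IntegrableOn (fun p => f p.1 p.2) (Ioo a b ×ˢ t) (volume.prod μ)) :
    ∫ p in Ioo a b ×ˢ t, f p.1 p.2 ∂(volume.prod μ) = ∫ x in t, (F b x - F a x) ∂μ := by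
  rw [IntegrableOn, ← Measure.prod_restrict] at hf
  rw [← Measure.prod_restrict, integral_prod_symm _ hf]
  refine integral_congr_ae ?_
  filter_upwards [hf.prod_left_ae, ae_restrict_mem ht] with x hfx hx
  rw [← integral_Ioc_eq_integral_Ioo, ← intervalIntegral.integral_of_le hab]
  refine intervalIntegral.integral_eq_sub_of_hasDerivAt (fun s hs => hF x hx s ?_) ?_
  · rwa [uIcc_of_le hab] at hs
  · exact (intervalIntegrable_iff_integrableOn_Ioo_of_le hab).2 hfx

theorem rpow_div_pow_eq {τ : ℝ} (hτ : 0 ≤ τ) (c ν : ℝ) (n : ℕ) :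
    (τ ^ c / ν) ^ n = τ ^ (n * c) / ν ^ n := by
  rw [div_pow, mul_comm, Real.rpow_mul_natCast hτ]

def carlemanFlux (a s u u' : ℝ) : ℝ :=
  2 * a * s * u' ^ 2 + 2 * a * u * u' + 8 * a ^ 3 * s ^ 3 * u ^ 2

theorem hasDerivAt_carlemanFlux (a : ℝ) {u u' : ℝ → ℝ} {s u'' : ℝ}
    (hu : HasDerivAt u (u' s) s) (hu' : HasDerivAt u' u'' s) :
    HasDerivAt (fun r => carlemanFlux a r (u r) (u' r))
      ((-u'' - 4 * a ^ 2 * s ^ 2 * u s) * (-(4 * a * s * u' s) - 2 * a * u s)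
        + 4 * a * u' s ^ 2 + 16 * a ^ 3 * (s ^ 2 * u s ^ 2)) s := by
  have h := ((((hasDerivAt_id s).const_mul (2 * a)).mul (hu'.pow 2)).add
    ((hu.const_mul (2 * a)).mul hu')).add
      (((hasDerivAt_pow 3 s).const_mul (8 * a ^ 3)).mul (hu.pow 2))
  refine (h.congr_deriv ?_).congr_of_eventuallyEq (Eventually.of_forall fun r => ?_)
  · simp only [id, Pi.pow_apply]
    push_cast
    ring
  · simp only [carlemanFlux, id, Pi.add_apply, Pi.mul_apply, Pi.pow_apply]

theorem carlemanFlux_sub (a s t u u' w w' : ℝ) :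
    carlemanFlux a s u u' - carlemanFlux a t w w'
      = 2 * a * (s * u' ^ 2 - t * w' ^ 2) + 2 * a * (u * u' - w * w')
        + 8 * a ^ 3 * (s ^ 3 * u ^ 2 - t ^ 3 * w ^ 2) := by
  simp only [carlemanFlux]
  ring

theorem lemma_2_4_general
    (S0 τ ν γ : ℝ) (hS0 : 0 < S0) (hτ : 0 < τ)
    (v vs vss : ℝ → ℝ → ℝ)
    -- v is smooth in the variable s
    (hvs : ∀ x ∈ Ioo (0:ℝ) 1, ∀ s ∈ Icc (-S0) S0, HasDerivAt (fun r => v r x) (vs s x) s)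
    (hvss : ∀ x ∈ Ioo (0:ℝ) 1, ∀ s ∈ Icc (-S0) S0, HasDerivAt (fun r => vs r x) (vss s x) s)
    -- all the occurring integrals are finite
    (hI : IntegrableOn (fun p : ℝ × ℝ =>
      (-(vss p.1 p.2) - 4 * (τ ^ (2 * γ / 3) / ν ^ 2) * p.1 ^ 2 * v p.1 p.2) *
        (-(4 * (τ ^ (γ / 3) / ν) * p.1 * vs p.1 p.2) - 2 * (τ ^ (γ / 3) / ν) * v p.1 p.2))
      (Zset S0))
    (hI1 : IntegrableOn (fun p : ℝ × ℝ => (vs p.1 p.2) ^ 2) (Zset S0))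
    (hI2 : IntegrableOn (fun p : ℝ × ℝ => p.1 ^ 2 * (v p.1 p.2) ^ 2) (Zset S0))
    (hIb1 : IntegrableOn
      (fun x => S0 * (vs S0 x) ^ 2 - (-S0) * (vs (-S0) x) ^ 2) (Ioo (0:ℝ) 1))
    (hIb2 : IntegrableOn
      (fun x => v S0 x * vs S0 x - v (-S0) x * vs (-S0) x) (Ioo (0:ℝ) 1))
    (hIb3 : IntegrableOn
      (fun x => S0 ^ 3 * (v S0 x) ^ 2 - (-S0) ^ 3 * (v (-S0) x) ^ 2) (Ioo (0:ℝ) 1)) :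
    (∫ p in Zset S0,
        (-(vss p.1 p.2) - 4 * (τ ^ (2 * γ / 3) / ν ^ 2) * p.1 ^ 2 * v p.1 p.2) *
          (-(4 * (τ ^ (γ / 3) / ν) * p.1 * vs p.1 p.2) - 2 * (τ ^ (γ / 3) / ν) * v p.1 p.2))
      = -(4 * (τ ^ (γ / 3) / ν) * ∫ p in Zset S0, (vs p.1 p.2) ^ 2)
        - 16 * (τ ^ γ / ν ^ 3) * (∫ p in Zset S0, p.1 ^ 2 * (v p.1 p.2) ^ 2)
        + (2 * (τ ^ (γ / 3) / ν) *
            (∫ x in Ioo (0:ℝ) 1, (S0 * (vs S0 x) ^ 2 - (-S0) * (vs (-S0) x) ^ 2))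
          + 2 * (τ ^ (γ / 3) / ν) *
            (∫ x in Ioo (0:ℝ) 1, (v S0 x * vs S0 x - v (-S0) x * vs (-S0) x))
          + 8 * (τ ^ γ / ν ^ 3) *
            (∫ x in Ioo (0:ℝ) 1, (S0 ^ 3 * (v S0 x) ^ 2 - (-S0) ^ 3 * (v (-S0) x) ^ 2))) := by
  set a := τ ^ (γ / 3) / ν
  have ha2 : τ ^ (2 * γ / 3) / ν ^ 2 = a ^ 2 := by
    rw [rpow_div_pow_eq hτ.le]; congr 2; push_cast; ring
  have ha3 : τ ^ γ / ν ^ 3 = a ^ 3 := by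
    rw [rpow_div_pow_eq hτ.le]; congr 2; push_cast; ring
  rw [ha2] at hI ⊢
  rw [ha3]
  have hflux := setIntegral_Ioo_prod_eq_integral_sub (by linarith : -S0 ≤ S0) measurableSet_Ioo
    (F := fun s x => carlemanFlux a s (v s x) (vs s x))
    (fun x hx s hs => hasDerivAt_carlemanFlux a (hvs x hx s hs) (hvss x hx s hs))
    ((hI.add (hI1.const_mul (4 * a))).add (hI2.const_mul (16 * a ^ 3)))
  simp only [carlemanFlux_sub] at hflux
  rw [← Measure.volume_eq_prod, ← Zset, integral_add ?_ (hIb3.const_mul _),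
    integral_add (hIb1.const_mul _) (hIb2.const_mul _), integral_const_mul, integral_const_mul,
    integral_const_mul, integral_add ?_ (hI2.const_mul _), integral_add hI (hI1.const_mul _),
    integral_const_mul, integral_const_mul] at hflux
  · linarith
  · exact hI.add (hI1.const_mul _)
  · exact (hIb1.const_mul _).add (hIb2.const_mul _)

/-- Lemma 2.4. -/
theorem lemma_2_4
    (α S0 τ ν γ : ℝ) (hα : α ∈ Ioo (0:ℝ) 2) (hS0 : 0 < S0)
    (hτ : 0 < τ) (hν : 0 < ν) (hγ : 0 < γ)
    (v vs vss vx Pv : ℝ → ℝ → ℝ)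
    -- v is smooth in the variable s
    (hvs : ∀ x ∈ Ioo (0:ℝ) 1, ∀ s ∈ Icc (-S0) S0, HasDerivAt (fun r => v r x) (vs s x) s)
    (hvss : ∀ x ∈ Ioo (0:ℝ) 1, ∀ s ∈ Icc (-S0) S0, HasDerivAt (fun r => vs r x) (vss s x) s)
    -- x-derivatives of v (s-sections belong to D(P))
    (hvx : ∀ s ∈ Icc (-S0) S0, ∀ x ∈ Ioo (0:ℝ) 1, HasDerivAt (fun y => v s y) (vx s x) x)
    (hPv : ∀ s ∈ Icc (-S0) S0, ∀ x ∈ Ioo (0:ℝ) 1,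
      HasDerivAt (fun y => y ^ α * vx s y) (Pv s x) x)
    -- boundary conditions contained in H¹_α(0,1) and in D(P)
    (hbc1 : ∀ s ∈ Icc (-S0) S0, Tendsto (fun x => v s x) (nhdsWithin 1 (Iio 1)) (nhds 0))
    (hbc0w : ∀ s ∈ Icc (-S0) S0, α < 1 →
      Tendsto (fun x => v s x) (nhdsWithin 0 (Ioi 0)) (nhds 0))
    (hbc0s : ∀ s ∈ Icc (-S0) S0, 1 ≤ α →
      Tendsto (fun x => x ^ α * vx s x) (nhdsWithin 0 (Ioi 0)) (nhds 0))
    -- integrability conditions contained in H¹_α(0,1) and in D(P)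
    (hL2 : ∀ s ∈ Icc (-S0) S0, ∫⁻ x in Ioo (0:ℝ) 1, ENNReal.ofReal ((v s x) ^ 2) < ⊤)
    (hL2x : ∀ s ∈ Icc (-S0) S0, ∫⁻ x in Ioo (0:ℝ) 1, ENNReal.ofReal (x ^ α * (vx s x) ^ 2) < ⊤)
    (hL2P : ∀ s ∈ Icc (-S0) S0, ∫⁻ x in Ioo (0:ℝ) 1, ENNReal.ofReal ((Pv s x) ^ 2) < ⊤)
    -- all the occurring integrals are finite
    (hI : IntegrableOn (fun p : ℝ × ℝ =>
      (-(vss p.1 p.2) - 4 * (τ ^ (2 * γ / 3) / ν ^ 2) * p.1 ^ 2 * v p.1 p.2) *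
        (-(4 * (τ ^ (γ / 3) / ν) * p.1 * vs p.1 p.2) - 2 * (τ ^ (γ / 3) / ν) * v p.1 p.2))
      (Zset S0))
    (hI1 : IntegrableOn (fun p : ℝ × ℝ => (vs p.1 p.2) ^ 2) (Zset S0))
    (hI2 : IntegrableOn (fun p : ℝ × ℝ => p.1 ^ 2 * (v p.1 p.2) ^ 2) (Zset S0))
    (hIb1 : IntegrableOn
      (fun x => S0 * (vs S0 x) ^ 2 - (-S0) * (vs (-S0) x) ^ 2) (Ioo (0:ℝ) 1))
    (hIb2 : IntegrableOn
      (fun x => v S0 x * vs S0 x - v (-S0) x * vs (-S0) x) (Ioo (0:ℝ) 1))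
    (hIb3 : IntegrableOn
      (fun x => S0 ^ 3 * (v S0 x) ^ 2 - (-S0) ^ 3 * (v (-S0) x) ^ 2) (Ioo (0:ℝ) 1)) :
    (∫ p in Zset S0,
        (-(vss p.1 p.2) - 4 * (τ ^ (2 * γ / 3) / ν ^ 2) * p.1 ^ 2 * v p.1 p.2) *
          (-(4 * (τ ^ (γ / 3) / ν) * p.1 * vs p.1 p.2) - 2 * (τ ^ (γ / 3) / ν) * v p.1 p.2))
      = -(4 * (τ ^ (γ / 3) / ν) * ∫ p in Zset S0, (vs p.1 p.2) ^ 2)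
        - 16 * (τ ^ γ / ν ^ 3) * (∫ p in Zset S0, p.1 ^ 2 * (v p.1 p.2) ^ 2)
        + (2 * (τ ^ (γ / 3) / ν) *
            (∫ x in Ioo (0:ℝ) 1, (S0 * (vs S0 x) ^ 2 - (-S0) * (vs (-S0) x) ^ 2))
          + 2 * (τ ^ (γ / 3) / ν) *
            (∫ x in Ioo (0:ℝ) 1, (v S0 x * vs S0 x - v (-S0) x * vs (-S0) x))
          + 8 * (τ ^ γ / ν ^ 3) *
            (∫ x in Ioo (0:ℝ) 1, (S0 ^ 3 * (v S0 x) ^ 2 - (-S0) ^ 3 * (v (-S0) x) ^ 2))) :=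
  lemma_2_4_general S0 τ ν γ hS0 hτ v vs vss hvs hvss hI hI1 hI2 hIb1 hIb2 hIb3
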